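/- Let N be a positive integer and Q a divisor of N with gcd(Q, N/Q) = 1. Then for any integers x coprime to N/Q and y coprime to Q, there exist integers a, b, c, d with a ≡ x (mod N/Q), b ≡ y (mod Q), and Q·a·Q·d − b·N·c = Q; that is, the set W_{Q,x,y} of matrices [[Qa, b],[Nc, Qd]] of determinant Q with these congruence conditions is nonempty. -/
import Mathlib

/-- Integer Chinese remainder: a solution exists for coprime moduli. -/
private lemma crtZ (m n x y : ℤ) (h : IsCoprime m n) :
    ∃ z : ℤ, z ≡ x [ZMOD m] ∧ z ≡ y [ZMOD n] := by
  obtain ⟨u, v, huv⟩ := h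
  refine ⟨x * (v * n) + y * (u * m), ?_, ?_⟩
  · rw [Int.modEq_iff_dvd]
    exact ⟨(x - y) * u, by linear_combination (-x) * huv⟩
  · rw [Int.modEq_iff_dvd]
    exact ⟨(y - x) * v, by linear_combination (-y) * huv⟩

private lemma coprime_of_modEq {n a b : ℤ} (h : a ≡ b [ZMOD n]) (hb : IsCoprime b n) :
    IsCoprime a n := by
  obtain ⟨k, hk⟩ := Int.ModEq.dvd h
  have : a = b + n * (-k) := by linarith
  rw [this]
  exact hb.add_mul_left_left (-k)

/-- If `Q` is an exact divisor of `N` (`Q ∣ N`, `gcd(Q, N/Q) = 1`), `x` is coprime to `N/Q`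
and `y` is coprime to `Q`, then there are integers `a, b, c, d` with `a ≡ x (mod N/Q)`,
`b ≡ y (mod Q)` and `(Qa)(Qd) − b(Nc) = Q`; i.e. the set `W_{Q,x,y}` of matrices
`[[Qa, b], [Nc, Qd]]` of determinant `Q` with these congruences is nonempty. -/
theorem atkin_lehner_coset_nonempty (N Q : ℕ) (hN : 0 < N) (hQ : Q ∣ N)
    (hexact : Nat.Coprime Q (N / Q)) (x y : ℤ)
    (hx : IsCoprime x ((N / Q : ℕ) : ℤ)) (hy : IsCoprime y (Q : ℤ)) :
    ∃ a b c d : ℤ,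
      a ≡ x [ZMOD ((N / Q : ℕ) : ℤ)] ∧ b ≡ y [ZMOD (Q : ℤ)] ∧
      ((Q : ℤ) * a) * ((Q : ℤ) * d) - b * ((N : ℤ) * c) = (Q : ℤ) := by
  set M : ℤ := ((N / Q : ℕ) : ℤ) with hM
  have hQM : IsCoprime (Q : ℤ) M := by
    rw [hM, Nat.isCoprime_iff_coprime]; exact hexact
  obtain ⟨b, hbQ, hbM⟩ := crtZ (Q : ℤ) M y 1 hQM
  have hbQ' : IsCoprime b (Q : ℤ) := coprime_of_modEq hbQ hy
  have hbM' : IsCoprime b M := coprime_of_modEq hbM (isCoprime_one_left)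
  have hMQb : IsCoprime M ((Q : ℤ) * b) := hQM.symm.mul_right hbM'.symm
  obtain ⟨a, haM, haQb⟩ := crtZ M ((Q : ℤ) * b) x 1 hMQb
  have haM' : IsCoprime a M := coprime_of_modEq haM hx
  have haQb' : IsCoprime a ((Q : ℤ) * b) := coprime_of_modEq haQb (isCoprime_one_left)
  have haQ : IsCoprime a (Q : ℤ) := haQb'.of_isCoprime_of_dvd_right ⟨b, rfl⟩
  have hab : IsCoprime a b := haQb'.of_isCoprime_of_dvd_right ⟨(Q : ℤ), mul_comm _ _⟩
  have key : IsCoprime ((Q : ℤ) * a) (M * b) :=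
    (IsCoprime.mul_left hQM haM').mul_right (IsCoprime.mul_left hbQ'.symm hab)
  obtain ⟨u, v, huv⟩ := key
  have hNQM : (N : ℤ) = (Q : ℤ) * M := by
    rw [hM]
    exact_mod_cast congrArg (Nat.cast : ℕ → ℤ) (Nat.mul_div_cancel' hQ).symm
  refine ⟨a, b, -v, u, haM, hbQ, ?_⟩
  rw [hNQM]
  linear_combination (Q : ℤ) * huv
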